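/- Let A be a countable alphabet, P a probability distribution on A, and D a proper and almost surely complete dictionary over A. Then for every positive integer m, -∑_{α∈D, |α|≥m} P(α) log₂ P(α) ≥ -∑_{β ∈ D_m^⊥} P(β) log₂ P(β), where D_m^⊥ = {α ∈ D : |α| = m} ∪ T_m and T_m = {α ∈ A^m : no β ∈ D is a prefix of α}, with all sums taken in [0,∞]. -/

import Mathlib

open scoped ENNReal
open Filter

/-- The probability of a finite string, obtained by extending the
distribution `P` multiplicatively: `P(a₁⋯aₙ) = ∏ᵢ P(aᵢ)`. -/
noncomputable def strProb {A : Type*} (P : PMF A) (l : List A) : ℝ≥0∞ :=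
  (l.map fun a => P a).prod

/-- A dictionary is a set of nonempty finite strings. -/
def IsDictionary {A : Type*} (D : Set (List A)) : Prop :=
  ∀ α ∈ D, α ≠ []

/-- A dictionary is proper if no string in it is a (proper) prefix of
another string in it. -/
def IsProper {A : Type*} (D : Set (List A)) : Prop :=
  ∀ α ∈ D, ∀ β ∈ D, α <+: β → α = β

/-- A dictionary is complete if every infinite sequence over `A` has a
prefix in it. -/
def IsCompleteDict {A : Type*} (D : Set (List A)) : Prop :=
  ∀ x : ℕ → A, ∃ α ∈ D, α = (List.range α.length).map x

/-- The probability that the length-`n` prefix of a random infinite sequence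
has some prefix belonging to `D`. -/
noncomputable def prefixProb {A : Type*} (P : PMF A) (D : Set (List A)) (n : ℕ) : ℝ≥0∞ :=
  ∑' γ : {γ : List A // γ.length = n ∧ ∃ β ∈ D, β <+: γ}, strProb P γ

/-- `D` is almost surely complete: under the infinite product measure `P^ℕ`,
the event that an infinite sequence has a prefix in `D` has probability `1`.
(By continuity from below, this probability is the limit, as `n → ∞`, of the
probability that the length-`n` prefix has a prefix in `D`.) -/
def IsASC {A : Type*} (P : PMF A) (D : Set (List A)) : Prop :=
  Tendsto (prefixProb P D) atTop (nhds 1)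

/-- `Tset D n` = strings of length `n` having no prefix in `D`. -/
def Tset {A : Type*} (D : Set (List A)) (n : ℕ) : Set (List A) :=
  {α | α.length = n ∧ ∀ β ∈ D, ¬ β <+: α}

/-- `Dperp D n = {α ∈ D : |α| = n} ∪ Tₙ`. -/
def Dperp {A : Type*} (D : Set (List A)) (n : ℕ) : Set (List A) :=
  {α ∈ D | α.length = n} ∪ Tset D n

/-- `Dn D n = {α ∈ D : |α| < n} ∪ Dₙ^⊥`. -/
def Dn {A : Type*} (D : Set (List A)) (n : ℕ) : Set (List A) :=
  {α ∈ D | α.length < n} ∪ Dperp D n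

/-- The one-letter extensions `αA = {αa : a ∈ A}` of a string `α`. -/
def oneExt {A : Type*} (α : List A) : Set (List A) :=
  {l | ∃ a : A, l = α ++ [a]}

/-- The extension `D[α] = (D \ {α}) ∪ αA` of a dictionary at `α`. -/
def extendDict {A : Type*} (D : Set (List A)) (α : List A) : Set (List A) :=
  (D \ {α}) ∪ oneExt α

/-- The nonnegative entropy contribution `-p log₂ p ∈ [0,∞]` of a
probability value `p`. -/
noncomputable def entTerm (p : ℝ≥0∞) : ℝ≥0∞ :=
  ENNReal.ofReal (-(p.toReal * Real.logb 2 p.toReal))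

/-- The entropy `H(E) = -∑_{α∈E} P(α) log₂ P(α)` of a dictionary, in `[0,∞]`. -/
noncomputable def dictEntropy {A : Type*} (P : PMF A) (E : Set (List A)) : ℝ≥0∞ :=
  ∑' α : E, entTerm (strProb P α)

/-- The average length `l̄(E) = ∑_{α∈E} P(α)|α|` of a dictionary, in `[0,∞]`. -/
noncomputable def avgLen {A : Type*} (P : PMF A) (E : Set (List A)) : ℝ≥0∞ :=
  ∑' α : E, strProb P α * (α : List A).length

/-- The source entropy `H(P) = -∑_{a∈A} P(a) log₂ P(a)`, in `[0,∞]`. -/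
noncomputable def srcEntropy {A : Type*} (P : PMF A) : ℝ≥0∞ :=
  ∑' a : A, entTerm (P a)

/-! Match each `β ∈ Dₘ^⊥` with the words of `D` extending it; these fibres are disjoint,
since all such `β` have length `m`. If `β ∈ D`, its fibre contains `β`. If `β ∈ Tₘ`, almost
sure completeness says the fibre carries total mass at least `P(β)`, in pieces no larger than
`P(β)`; as `-log` is decreasing, splitting a mass this way can only increase `-p log p`. -/

lemma entTerm_eq_mul {p : ℝ≥0∞} (hp : p ≠ ⊤) :
    entTerm p = p * ENNReal.ofReal (-Real.logb 2 p.toReal) := by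
  rw [entTerm, ← mul_neg, ENNReal.ofReal_mul ENNReal.toReal_nonneg, ENNReal.ofReal_toReal hp]

lemma mul_neg_logb_le_entTerm {p q : ℝ≥0∞} (hqp : q ≤ p) (hp : p ≠ ⊤) :
    q * ENNReal.ofReal (-Real.logb 2 p.toReal) ≤ entTerm q := by
  rcases eq_or_ne q 0 with rfl | hq
  · simp
  have hq' : q ≠ ⊤ := ne_top_of_le_ne_top hp hqp
  rw [entTerm_eq_mul hq']
  gcongr
  exacts [one_lt_two, ENNReal.toReal_pos hq hq']

lemma entTerm_le_tsum {ι : Type*} {p : ℝ≥0∞} {f : ι → ℝ≥0∞} (hp : p ≠ ⊤) (hf : ∀ i, f i ≤ p)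
    (hsum : p ≤ ∑' i, f i) : entTerm p ≤ ∑' i, entTerm (f i) :=
  calc entTerm p = p * ENNReal.ofReal (-Real.logb 2 p.toReal) := entTerm_eq_mul hp
    _ ≤ (∑' i, f i) * ENNReal.ofReal (-Real.logb 2 p.toReal) := by gcongr
    _ = ∑' i, f i * ENNReal.ofReal (-Real.logb 2 p.toReal) := ENNReal.tsum_mul_right.symm
    _ ≤ ∑' i, entTerm (f i) := ENNReal.tsum_le_tsum fun i => mul_neg_logb_le_entTerm (hf i) hp

section Dictionary

variable {A : Type*}

def extensions (β : List A) (n : ℕ) : Set (List A) :=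
  {γ | γ.length = n ∧ β <+: γ}

section strProb

variable (P : PMF A)

lemma strProb_nil : strProb P [] = 1 := by simp [strProb]

lemma strProb_cons (a : A) (l : List A) : strProb P (a :: l) = P a * strProb P l := by
  simp [strProb]

lemma strProb_append (l l' : List A) : strProb P (l ++ l') = strProb P l * strProb P l' := by
  simp [strProb]

lemma strProb_le_one (l : List A) : strProb P l ≤ 1 := by
  induction l with
  | nil => simp [strProb_nil]
  | cons a l ih => simpa [strProb_cons] using mul_le_one' (P.coe_le_one a) ih

lemma strProb_ne_top (l : List A) : strProb P l ≠ ⊤ :=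
  ne_top_of_le_ne_top ENNReal.one_ne_top (strProb_le_one P l)

lemma strProb_le_of_isPrefix {l l' : List A} (h : l <+: l') : strProb P l' ≤ strProb P l := by
  obtain ⟨t, rfl⟩ := h
  rw [strProb_append]
  exact mul_le_of_le_one_right' (strProb_le_one P t)

end strProb

def consEquiv (A : Type*) (k : ℕ) :
    A × {γ : List A // γ.length = k} ≃ {γ : List A // γ.length = k + 1} where
  toFun p := ⟨p.1 :: p.2.1, by simp [p.2.2]⟩
  invFun γ := (γ.1.head (List.ne_nil_of_length_pos (by omega)), ⟨γ.1.tail, by simp [γ.2]⟩)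
  left_inv _ := rfl
  right_inv γ := Subtype.ext (List.cons_head_tail _)

def appendEquiv (β : List A) (n : ℕ) (h : β.length ≤ n) :
    {δ : List A // δ.length = n - β.length} ≃ extensions β n where
  toFun δ := ⟨β ++ δ.1, by simp [δ.2]; omega, List.prefix_append _ _⟩
  invFun γ := ⟨γ.1.drop β.length, by rw [List.length_drop, γ.2.1]⟩
  left_inv _ := Subtype.ext List.drop_left
  right_inv γ := Subtype.ext <| by
    obtain ⟨t, ht⟩ := γ.2.2
    simp [← ht]

variable (P : PMF A)

lemma tsum_strProb_length_eq (k : ℕ) :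
    ∑' γ : {γ : List A // γ.length = k}, strProb P γ = 1 := by
  induction k with
  | zero =>
    rw [tsum_eq_single ⟨[], rfl⟩, strProb_nil]
    rintro ⟨γ, hγ⟩ hne
    exact absurd (Subtype.ext (List.length_eq_zero_iff.mp hγ)) hne
  | succ k ih =>
    rw [← (consEquiv A k).tsum_eq]
    calc ∑' p, strProb P (consEquiv A k p)
        = ∑' p : A × {γ : List A // γ.length = k}, P p.1 * strProb P p.2 :=
          tsum_congr fun p => strProb_cons P _ _
      _ = ∑' a, P a * ∑' γ : {γ : List A // γ.length = k}, strProb P γ := by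
          rw [ENNReal.tsum_prod']
          simp_rw [ENNReal.tsum_mul_left]
      _ = 1 := by simp [ih, P.tsum_coe]

lemma tsum_strProb_extensions {β : List A} {n : ℕ} (h : β.length ≤ n) :
    ∑' γ : extensions β n, strProb P γ = strProb P β := by
  rw [← (appendEquiv β n h).tsum_eq]
  simp only [appendEquiv, Equiv.coe_fn_mk, strProb_append, ENNReal.tsum_mul_left,
    tsum_strProb_length_eq, mul_one]

lemma tsum_strProb_extensions_le (β : List A) (n : ℕ) :
    ∑' γ : extensions β n, strProb P γ ≤ strProb P β := by
  by_cases h : β.length ≤ n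
  · exact (tsum_strProb_extensions P h).le
  · have : IsEmpty (extensions β n) := ⟨fun γ => h (γ.2.1 ▸ γ.2.2.length_le)⟩
    simp

lemma tsum_strProb_le_of_forall_prefix {S E : Set (List A)} {n : ℕ}
    (hS : ∀ γ ∈ S, γ.length = n ∧ ∃ α ∈ E, α <+: γ) :
    ∑' γ : S, strProb P γ ≤ ∑' α : E, strProb P α := by
  have hcover : S ⊆ ⋃ α ∈ E, extensions α n := fun γ hγ => by
    obtain ⟨hlen, α, hα, hαγ⟩ := hS γ hγ
    exact Set.mem_biUnion hα ⟨hlen, hαγ⟩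
  calc ∑' γ : S, strProb P γ
      ≤ ∑' γ : ⋃ α ∈ E, extensions α n, strProb P γ := ENNReal.tsum_mono_subtype _ hcover
    _ ≤ ∑' α : E, ∑' γ : extensions (α : List A) n, strProb P (γ : List A) :=
        ENNReal.tsum_biUnion_le_tsum _ _ _
    _ ≤ ∑' α : E, strProb P α := ENNReal.tsum_le_tsum fun α => tsum_strProb_extensions_le P α n

lemma prefixProb_add_tsum_Tset (D : Set (List A)) (n : ℕ) :
    prefixProb P D n + ∑' γ : Tset D n, strProb P γ = 1 := by
  have hdisj : Disjoint {γ : List A | γ.length = n ∧ ∃ β ∈ D, β <+: γ} (Tset D n) :=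
    Set.disjoint_left.mpr fun γ ⟨_, β, hβ, hβγ⟩ hT => hT.2 β hβ hβγ
  have hunion : {γ : List A | γ.length = n ∧ ∃ β ∈ D, β <+: γ} ∪ Tset D n =
      {γ | γ.length = n} := by
    ext γ
    refine ⟨fun h => h.elim And.left And.left, fun h => ?_⟩
    by_cases hp : ∃ β ∈ D, β <+: γ
    exacts [Or.inl ⟨h, hp⟩, Or.inr ⟨h, fun β hβ hβγ => hp ⟨β, hβ, hβγ⟩⟩]
  change ∑' γ : ({γ | γ.length = n ∧ ∃ β ∈ D, β <+: γ} : Set (List A)), strProb P γ + _ = 1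
  rw [← ENNReal.summable.tsum_union_disjoint hdisj ENNReal.summable, hunion]
  exact tsum_strProb_length_eq P n

lemma tendsto_tsum_Tset_zero {D : Set (List A)} (hasc : IsASC P D) :
    Tendsto (fun n => ∑' γ : Tset D n, strProb P γ) atTop (nhds 0) := by
  have hle : ∀ n, ∑' γ : Tset D n, strProb P γ ≤ 1 - prefixProb P D n := fun n =>
    have hsum := prefixProb_add_tsum_Tset P D n
    ENNReal.le_sub_of_add_le_left (ne_top_of_le_ne_top ENNReal.one_ne_top
      (le_self_add.trans hsum.le)) hsum.le
  have hlim : Tendsto (fun n => 1 - prefixProb P D n) atTop (nhds 0) := by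
    simpa using ENNReal.Tendsto.sub tendsto_const_nhds hasc (Or.inl ENNReal.one_ne_top)
  exact tendsto_of_tendsto_of_tendsto_of_le_of_le tendsto_const_nhds hlim (fun _ => zero_le) hle

lemma strProb_le_tsum_of_forall_not_prefix {D : Set (List A)} (hasc : IsASC P D)
    {β : List A} (hβ : ∀ δ ∈ D, ¬ δ <+: β) :
    strProb P β ≤ ∑' α : {α ∈ D | β <+: α}, strProb P α := by
  set S := ∑' α : {α ∈ D | β <+: α}, strProb P α
  -- A length-`n` extension of `β` either lies in `Tset D n`, whose mass vanishes as `n → ∞`,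
  -- or extends a word of `D`, which then has to extend `β`.
  have hstep : ∀ n ≥ β.length, strProb P β ≤ ∑' γ : Tset D n, strProb P γ + S := by
    intro n hn
    have hrest : ∑' γ : ↑(extensions β n \ Tset D n), strProb P γ ≤ S := by
      refine tsum_strProb_le_of_forall_prefix P fun γ ⟨⟨hlen, hβγ⟩, hγT⟩ => ⟨hlen, ?_⟩
      obtain ⟨δ, hδ, hδγ⟩ : ∃ δ ∈ D, δ <+: γ := by
        by_contra! h
        exact hγT ⟨hlen, h⟩
      have hβδ : β <+: δ := (List.prefix_or_prefix_of_prefix hδγ hβγ).resolve_left (hβ δ hδ)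
      exact ⟨δ, ⟨hδ, hβδ⟩, hδγ⟩
    calc strProb P β = ∑' γ : extensions β n, strProb P γ := (tsum_strProb_extensions P hn).symm
      _ ≤ ∑' γ : ↑(Tset D n ∪ (extensions β n \ Tset D n)), strProb P γ :=
          ENNReal.tsum_mono_subtype _ fun γ hγ => by
            by_cases hT : γ ∈ Tset D n <;> simp [hT, hγ]
      _ ≤ ∑' γ : Tset D n, strProb P γ + ∑' γ : ↑(extensions β n \ Tset D n), strProb P γ :=
          ENNReal.tsum_union_le _ _ _
      _ ≤ ∑' γ : Tset D n, strProb P γ + S := by gcongr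
  have hlim : Tendsto (fun n => ∑' γ : Tset D n, strProb P γ + S) atTop (nhds S) := by
    simpa using (tendsto_tsum_Tset_zero P hasc).add_const S
  exact ge_of_tendsto hlim (eventually_atTop.mpr ⟨β.length, hstep⟩)

lemma length_eq_of_mem_Dperp {D : Set (List A)} {m : ℕ} {β : List A} (hβ : β ∈ Dperp D m) :
    β.length = m :=
  hβ.elim And.right And.left

lemma pairwiseDisjoint_prefix_fibers {S : Set (List A)} {m : ℕ} (hS : ∀ β ∈ S, β.length = m)
    (E : Set (List A)) : S.PairwiseDisjoint fun β => {α ∈ E | β <+: α} :=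
  fun β₁ hβ₁ β₂ hβ₂ hne => Set.disjoint_left.mpr fun α ⟨_, h₁⟩ ⟨_, h₂⟩ =>
    hne ((List.prefix_of_prefix_length_le h₁ h₂ (by rw [hS β₁ hβ₁, hS β₂ hβ₂])).eq_of_length
      (by rw [hS β₁ hβ₁, hS β₂ hβ₂]))

lemma entTerm_strProb_le_tsum_of_mem_Dperp {D : Set (List A)} (hasc : IsASC P D) {m : ℕ}
    {β : List A} (hβ : β ∈ Dperp D m) :
    entTerm (strProb P β) ≤ ∑' α : {α ∈ D | β <+: α}, entTerm (strProb P α) := by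
  rcases hβ with ⟨hβD, -⟩ | ⟨-, hβT⟩
  · exact ENNReal.le_tsum (f := fun α : {α ∈ D | β <+: α} => entTerm (strProb P α))
      ⟨β, hβD, List.prefix_refl β⟩
  · exact entTerm_le_tsum (strProb_ne_top P β) (fun α => strProb_le_of_isPrefix P α.2.2)
      (strProb_le_tsum_of_forall_not_prefix P hasc hβT)

end Dictionary

theorem dictEntropy_Dperp_le_general {A : Type*} (P : PMF A) (D : Set (List A)) (hasc : IsASC P D)
    (m : ℕ) :
    dictEntropy P (Dperp D m) ≤ dictEntropy P {α ∈ D | m ≤ α.length} := by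
  have hsub : (⋃ β ∈ Dperp D m, {α ∈ D | β <+: α}) ⊆ {α ∈ D | m ≤ α.length} :=
    Set.iUnion₂_subset fun β hβ α hα => ⟨hα.1, length_eq_of_mem_Dperp hβ ▸ hα.2.length_le⟩
  calc dictEntropy P (Dperp D m)
      ≤ ∑' β : Dperp D m, ∑' α : {α ∈ D | (β : List A) <+: α}, entTerm (strProb P α) :=
        ENNReal.tsum_le_tsum fun β => entTerm_strProb_le_tsum_of_mem_Dperp P hasc β.2
    _ = ∑' α : ⋃ β ∈ Dperp D m, {α ∈ D | β <+: α}, entTerm (strProb P α) :=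
        (ENNReal.tsum_biUnion' (f := fun α => entTerm (strProb P α))
          (pairwiseDisjoint_prefix_fibers (fun _ => length_eq_of_mem_Dperp) D)).symm
    _ ≤ ∑' α : {α ∈ D | m ≤ α.length}, entTerm (strProb P α) :=
        ENNReal.tsum_mono_subtype (fun α => entTerm (strProb P α)) hsub

/-- If `D` is proper and almost surely complete then, for
every positive integer `m`,
`-∑_{α∈D, |α|≥m} P(α) log₂ P(α) ≥ -∑_{β ∈ D_m^⊥} P(β) log₂ P(β)`. -/
theorem dictEntropy_Dperp_le {A : Type*} [Countable A] (P : PMF A)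
    (D : Set (List A)) (hdict : IsDictionary D) (hprop : IsProper D)
    (hasc : IsASC P D) (m : ℕ) (hm : 0 < m) :
    dictEntropy P (Dperp D m) ≤ dictEntropy P {α ∈ D | m ≤ α.length} :=
  dictEntropy_Dperp_le_general P D hasc m
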